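/- Let κ : ℝ → ℝ be continuous and bounded with finite nonzero limits κ₊ = lim_{x→+∞} κ(x) and κ₋ = lim_{x→−∞} κ(x), and suppose κ − κ₊ ∈ L¹([0,∞)) and κ − κ₋ ∈ L¹((−∞,0]). Let E ∈ ℝ with |E| < (3/2) min(|κ₊|, |κ₋|). Then the set of bounded C¹ solutions Ψ : ℝ → ℂ² of the Dirac eigenvalue equation 𝒟Ψ = EΨ (pointwise on ℝ) is a complex vector space of dimension at most one: any two bounded C¹ solutions Ψ₁, Ψ₂ are linearly dependent over ℂ. In particular, every eigenvalue of 𝒟 in the spectral gap (−(3/2)min(|κ₊|,|κ₋|), (3/2)min(|κ₊|,|κ₋|)) is simple. -/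

import Mathlib

/-!
Write `ω = 2E/3` and `Ψ = (u, v)`. Along a solution,
`(‖u‖² - ‖v‖²)' ≥ 2 (κ - |ω|) (‖u‖² + ‖v‖²)`, so wherever `κ ≥ |ω| + δ` the quantity
`‖u‖² - ‖v‖²` grows exponentially as soon as it is positive. If `κ₊ > 0` this holds on a half-line
`[x₀, ∞)` by the gap condition `|ω| < |κ₊|`, and a bounded solution must satisfy `‖u x₀‖ ≤ ‖v x₀‖`
(if `κ₊ < 0`, swap the components, which replaces `κ` by `-κ`). Bounded solutions form a vector
space, so their values at `x₀` form a subspace of `ℂ²` inside this cone; it cannot contain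
`(1, 0)`, so it is at most a line. Two bounded solutions therefore have a nontrivial combination
vanishing at `x₀`, hence everywhere by uniqueness for the linear ODE, which is Lipschitz
because `κ` is bounded.
-/

noncomputable section

open Complex Real MeasureTheory Filter

/-- The pointwise Dirac eigenvalue equation `𝒟Ψ = EΨ`, where
`𝒟Ψ = (3/2)(−iσ₁Ψ′ + κσ₂Ψ)`. -/
def DiracEq (κ : ℝ → ℝ) (E : ℝ) (Ψ : ℝ → ℂ × ℂ) : Prop :=
  ∀ x : ℝ,
    (3 / 2 : ℂ) * (-I * deriv (fun y => (Ψ y).2) x - I * ((κ x : ℝ) : ℂ) * (Ψ x).2)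
      = (E : ℂ) * (Ψ x).1 ∧
    (3 / 2 : ℂ) * (-I * deriv (fun y => (Ψ y).1) x + I * ((κ x : ℝ) : ℂ) * (Ψ x).1)
      = (E : ℂ) * (Ψ x).2

theorem nonpos_of_mul_le_deriv_of_bddAbove {f f' : ℝ → ℝ} {c x₀ : ℝ} (hc : 0 < c)
    (hf : ∀ x, HasDerivAt f (f' x) x) (hf' : ∀ x, x₀ ≤ x → c * f x ≤ f' x)
    (hbdd : BddAbove (Set.range f)) : f x₀ ≤ 0 := by
  set g : ℝ → ℝ := fun x => f x * rexp (-(c * x))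
  have hg : ∀ x, HasDerivAt g ((f' x - c * f x) * rexp (-(c * x))) x := fun x =>
    ((hf x).mul ((hasDerivAt_id x).const_mul c).neg.exp).congr_deriv
      (by simp only [id_eq, Pi.neg_apply, mul_one, mul_neg]; ring)
  have hmono : MonotoneOn g (Set.Ici x₀) :=
    monotoneOn_of_hasDerivWithinAt_nonneg (convex_Ici x₀)
      (fun x _ => (hg x).continuousAt.continuousWithinAt)
      (fun x _ => (hg x).hasDerivWithinAt)
      (fun x hx => mul_nonneg (sub_nonneg.2 (hf' x (interior_subset hx))) (exp_pos _).le)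
  have hgrowth : ∀ x, x₀ ≤ x → f x₀ * rexp (c * (x - x₀)) ≤ f x := fun x hx =>
    calc f x₀ * rexp (c * (x - x₀)) = g x₀ * rexp (c * x) := by
          simp only [g, mul_assoc, ← Real.exp_add]; ring_nf
      _ ≤ g x * rexp (c * x) := by gcongr; exact hmono Set.self_mem_Ici hx hx
      _ = f x := by simp [g, mul_assoc, ← Real.exp_add]
  by_contra! hpos
  refine not_bddAbove_of_tendsto_atTop (l := atTop) ?_ hbdd
  refine tendsto_atTop_mono' _ ((eventually_ge_atTop x₀).mono hgrowth) ?_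
  exact (tendsto_exp_atTop.comp
    ((tendsto_id.atTop_add tendsto_const_nhds).const_mul_atTop hc)).const_mul_atTop hpos

theorem not_linearIndependent_of_norm_fst_le_norm_snd {a b : ℂ × ℂ}
    (h : ∀ c₁ c₂ : ℂ, ‖(c₁ • a + c₂ • b).1‖ ≤ ‖(c₁ • a + c₂ • b).2‖) :
    ¬LinearIndependent ℂ ![a, b] := by
  intro hind
  have hspan : Submodule.span ℂ (Set.range ![a, b]) = ⊤ :=
    hind.span_eq_top_of_card_eq_finrank (by simp)
  obtain ⟨c₁, c₂, hc⟩ : ∃ c₁ c₂ : ℂ, c₁ • a + c₂ • b = (1, 0) := by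
    rw [← Submodule.mem_span_pair, ← Matrix.range_cons_cons_empty, hspan]
    trivial
  have h10 := h c₁ c₂
  rw [hc] at h10
  norm_num at h10

/-- `𝒟Ψ = EΨ` solved for `Ψ'`, with `ω = 2E/3`. -/
def diracField (κ : ℝ → ℝ) (ω x : ℝ) (ψ : ℂ × ℂ) : ℂ × ℂ :=
  (κ x * ψ.1 + I * ω * ψ.2, I * ω * ψ.1 - κ x * ψ.2)

def IsDiracSolution (κ : ℝ → ℝ) (ω : ℝ) (Ψ : ℝ → ℂ × ℂ) : Prop :=
  ∀ x, HasDerivAt Ψ (diracField κ ω x (Ψ x)) x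

theorem DiracEq.isDiracSolution {κ : ℝ → ℝ} {E : ℝ} {Ψ : ℝ → ℂ × ℂ} (h : DiracEq κ E Ψ)
    (hΨ : Differentiable ℝ Ψ) : IsDiracSolution κ (2 * E / 3) Ψ := fun x => by
  obtain ⟨e₁, e₂⟩ := h x
  refine ((hΨ x).fst.hasDerivAt.prodMk (hΨ x).snd.hasDerivAt).congr_deriv ?_
  ext <;> simp only [diracField] <;> push_cast
  · linear_combination (2 / 3 * I) * e₂ + (deriv (fun y => (Ψ y).1) x - κ x * (Ψ x).1) * I_sq
  · linear_combination (2 / 3 * I) * e₁ + (deriv (fun y => (Ψ y).2) x + κ x * (Ψ x).2) * I_sq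

section

variable {κ : ℝ → ℝ} {B ω : ℝ}

theorem diracField_smul_add_smul (x : ℝ) (c₁ c₂ : ℂ) (ψ₁ ψ₂ : ℂ × ℂ) :
    diracField κ ω x (c₁ • ψ₁ + c₂ • ψ₂) =
      c₁ • diracField κ ω x ψ₁ + c₂ • diracField κ ω x ψ₂ := by
  ext <;> simp only [diracField, Prod.fst_add, Prod.snd_add, Prod.smul_fst, Prod.smul_snd,
    smul_eq_mul] <;> ring

theorem diracField_sub (x : ℝ) (ψ φ : ℂ × ℂ) :
    diracField κ ω x (ψ - φ) = diracField κ ω x ψ - diracField κ ω x φ := by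
  ext <;> simp only [diracField, Prod.fst_sub, Prod.snd_sub] <;> ring

theorem norm_diracField_le (hκ : ∀ x, |κ x| ≤ B) (x : ℝ) (ψ : ℂ × ℂ) :
    ‖diracField κ ω x ψ‖ ≤ (B + |ω|) * ‖ψ‖ := by
  have hκx : ‖(κ x : ℂ)‖ ≤ B := by simpa using hκ x
  have hω : ‖I * ω‖ = |ω| := by simp
  have h₁ := norm_fst_le ψ
  have h₂ := norm_snd_le ψ
  have hB : 0 ≤ B := (abs_nonneg _).trans (hκ x)
  refine max_le ?_ ?_
  · calc ‖(κ x : ℂ) * ψ.1 + I * ω * ψ.2‖ ≤ B * ‖ψ‖ + |ω| * ‖ψ‖ := by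
          refine (norm_add_le _ _).trans ?_
          rw [norm_mul, norm_mul (I * ω), hω]
          gcongr
      _ = (B + |ω|) * ‖ψ‖ := by ring
  · calc ‖I * ω * ψ.1 - (κ x : ℂ) * ψ.2‖ ≤ |ω| * ‖ψ‖ + B * ‖ψ‖ := by
          refine (norm_sub_le _ _).trans ?_
          rw [norm_mul (I * ω), hω, norm_mul]
          gcongr
      _ = (B + |ω|) * ‖ψ‖ := by ring

theorem lipschitzWith_diracField (hκ : ∀ x, |κ x| ≤ B) (x : ℝ) :
    LipschitzWith (B + |ω|).toNNReal (diracField κ ω x) :=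
  LipschitzWith.of_dist_le' fun ψ φ => by
    simpa only [dist_eq_norm, diracField_sub] using norm_diracField_le hκ x (ψ - φ)

theorem sub_abs_mul_le_inner_diracField (x : ℝ) (ψ : ℂ × ℂ) :
    (κ x - |ω|) * (‖ψ.1‖ ^ 2 + ‖ψ.2‖ ^ 2) ≤
      inner ℝ ψ.1 (diracField κ ω x ψ).1 - inner ℝ ψ.2 (diracField κ ω x ψ).2 := by
  obtain ⟨⟨a, b⟩, ⟨c, d⟩⟩ := ψ
  simp only [diracField, Complex.inner, Complex.sq_norm, normSq_apply, mul_re, mul_im, add_re,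
    sub_re, conj_re, conj_im, ofReal_re, ofReal_im, I_re, I_im, add_im, sub_im]
  have h₁ := le_abs_self ω
  have h₂ := neg_abs_le ω
  nlinarith [mul_nonneg (sq_nonneg (a - d)) (by linarith : (0 : ℝ) ≤ |ω| + ω),
    mul_nonneg (sq_nonneg (a + d)) (by linarith : (0 : ℝ) ≤ |ω| - ω),
    mul_nonneg (sq_nonneg (b - c)) (by linarith : (0 : ℝ) ≤ |ω| + ω),
    mul_nonneg (sq_nonneg (b + c)) (by linarith : (0 : ℝ) ≤ |ω| - ω)]

namespace IsDiracSolution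

variable {Ψ Ψ₁ Ψ₂ : ℝ → ℂ × ℂ}

theorem hasDerivAt_fst (h : IsDiracSolution κ ω Ψ) (x : ℝ) :
    HasDerivAt (fun y => (Ψ y).1) (diracField κ ω x (Ψ x)).1 x :=
  (ContinuousLinearMap.fst ℝ ℂ ℂ).hasFDerivAt.comp_hasDerivAt x (h x)

theorem hasDerivAt_snd (h : IsDiracSolution κ ω Ψ) (x : ℝ) :
    HasDerivAt (fun y => (Ψ y).2) (diracField κ ω x (Ψ x)).2 x :=
  (ContinuousLinearMap.snd ℝ ℂ ℂ).hasFDerivAt.comp_hasDerivAt x (h x)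

theorem zero : IsDiracSolution κ ω 0 := fun x =>
  (hasDerivAt_const x 0).congr_deriv (by ext <;> simp [diracField])

theorem smul_add_smul (h₁ : IsDiracSolution κ ω Ψ₁) (h₂ : IsDiracSolution κ ω Ψ₂) (c₁ c₂ : ℂ) :
    IsDiracSolution κ ω (fun x => c₁ • Ψ₁ x + c₂ • Ψ₂ x) := fun x => by
  rw [diracField_smul_add_smul]
  exact ((h₁ x).const_smul c₁).add ((h₂ x).const_smul c₂)

theorem swap (h : IsDiracSolution κ ω Ψ) :
    IsDiracSolution (fun x => -κ x) ω (fun x => (Ψ x).swap) := fun x => by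
  refine ((h.hasDerivAt_snd x).prodMk (h.hasDerivAt_fst x)).congr_deriv ?_
  ext <;> simp only [diracField, Prod.fst_swap, Prod.snd_swap, ofReal_neg] <;> ring

theorem eq_of_apply_eq (hκ : ∀ x, |κ x| ≤ B) (h₁ : IsDiracSolution κ ω Ψ₁)
    (h₂ : IsDiracSolution κ ω Ψ₂) {x₀ : ℝ} (h : Ψ₁ x₀ = Ψ₂ x₀) : Ψ₁ = Ψ₂ :=
  ODE_solution_unique_univ (s := fun _ => Set.univ)
    (fun x => (lipschitzWith_diracField hκ x).lipschitzOnWith)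
    (fun x => ⟨h₁ x, trivial⟩) (fun x => ⟨h₂ x, trivial⟩) h

theorem norm_fst_le_norm_snd (h : IsDiracSolution κ ω Ψ) (hbdd : ∃ C, ∀ x, ‖Ψ x‖ ≤ C)
    {δ x₀ : ℝ} (hδ : 0 < δ) (hκ : ∀ x, x₀ ≤ x → |ω| + δ ≤ κ x) :
    ‖(Ψ x₀).1‖ ≤ ‖(Ψ x₀).2‖ := by
  set f : ℝ → ℝ := fun x => ‖(Ψ x).1‖ ^ 2 - ‖(Ψ x).2‖ ^ 2
  set f' : ℝ → ℝ := fun x => 2 * inner ℝ (Ψ x).1 (diracField κ ω x (Ψ x)).1 -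
    2 * inner ℝ (Ψ x).2 (diracField κ ω x (Ψ x)).2
  have hf : ∀ x, HasDerivAt f (f' x) x :=
    fun x => (h.hasDerivAt_fst x).norm_sq.sub (h.hasDerivAt_snd x).norm_sq
  have hf' : ∀ x, x₀ ≤ x → 2 * δ * f x ≤ f' x := by
    intro x hx
    have hfield := sub_abs_mul_le_inner_diracField (κ := κ) (ω := ω) x (Ψ x)
    have hκx := hκ x hx
    nlinarith [sq_nonneg ‖(Ψ x).1‖, sq_nonneg ‖(Ψ x).2‖]
  have hfbdd : BddAbove (Set.range f) := by
    obtain ⟨C, hC⟩ := hbdd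
    refine ⟨C ^ 2, Set.forall_mem_range.2 fun x => ?_⟩
    have hfst := (norm_fst_le (Ψ x)).trans (hC x)
    nlinarith [norm_nonneg (Ψ x).1, sq_nonneg ‖(Ψ x).2‖]
  have hf₀ := nonpos_of_mul_le_deriv_of_bddAbove (by positivity) hf hf' hfbdd
  exact (pow_le_pow_iff_left₀ (norm_nonneg _) (norm_nonneg _) two_ne_zero).1 (by linarith)

theorem exists_smul_add_smul_eq_zero {κp : ℝ} (hκ : ∀ x, |κ x| ≤ B)
    (hlim : Tendsto κ atTop (nhds κp)) (hω : |ω| < κp)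
    (h₁ : IsDiracSolution κ ω Ψ₁) (h₂ : IsDiracSolution κ ω Ψ₂)
    (hb₁ : ∃ C, ∀ x, ‖Ψ₁ x‖ ≤ C) (hb₂ : ∃ C, ∀ x, ‖Ψ₂ x‖ ≤ C) :
    ∃ c₁ c₂ : ℂ, ¬(c₁ = 0 ∧ c₂ = 0) ∧ ∀ x, c₁ • Ψ₁ x + c₂ • Ψ₂ x = 0 := by
  obtain ⟨x₀, hx₀⟩ : ∃ x₀, ∀ x, x₀ ≤ x → |ω| + (κp - |ω|) / 2 ≤ κ x :=
    eventually_atTop.1 (hlim.eventually (eventually_ge_nhds (by linarith)))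
  have hbdd : ∀ c₁ c₂ : ℂ, ∃ C, ∀ x, ‖c₁ • Ψ₁ x + c₂ • Ψ₂ x‖ ≤ C := by
    obtain ⟨C₁, hC₁⟩ := hb₁
    obtain ⟨C₂, hC₂⟩ := hb₂
    refine fun c₁ c₂ => ⟨‖c₁‖ * C₁ + ‖c₂‖ * C₂, fun x => (norm_add_le _ _).trans ?_⟩
    rw [norm_smul, norm_smul]
    gcongr
    exacts [hC₁ x, hC₂ x]
  have hcone : ∀ c₁ c₂ : ℂ,
      ‖(c₁ • Ψ₁ x₀ + c₂ • Ψ₂ x₀).1‖ ≤ ‖(c₁ • Ψ₁ x₀ + c₂ • Ψ₂ x₀).2‖ :=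
    fun c₁ c₂ => (h₁.smul_add_smul h₂ c₁ c₂).norm_fst_le_norm_snd (hbdd c₁ c₂)
      (half_pos (sub_pos.2 hω)) hx₀
  have hdep := not_linearIndependent_of_norm_fst_le_norm_snd hcone
  rw [LinearIndependent.pair_iff] at hdep
  push Not at hdep
  obtain ⟨c₁, c₂, hzero, hc⟩ := hdep
  exact ⟨c₁, c₂, fun h => hc h.1 h.2,
    congrFun ((h₁.smul_add_smul h₂ c₁ c₂).eq_of_apply_eq hκ zero hzero)⟩

end IsDiracSolution

end

theorem gap_eigenvalues_are_simple_general
    (κ : ℝ → ℝ) (hκbd : ∃ B : ℝ, ∀ x, |κ x| ≤ B)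
    (κp κm : ℝ)
    (hp : Tendsto κ atTop (nhds κp))
    (hp0 : κp ≠ 0)
    (E : ℝ) (hE : |E| < (3 / 2) * min |κp| |κm|)
    (Ψ₁ Ψ₂ : ℝ → ℂ × ℂ)
    (h1smooth : ContDiff ℝ 1 Ψ₁) (h2smooth : ContDiff ℝ 1 Ψ₂)
    (h1bd : ∃ B : ℝ, ∀ x, ‖Ψ₁ x‖ ≤ B) (h2bd : ∃ B : ℝ, ∀ x, ‖Ψ₂ x‖ ≤ B)
    (h1eq : DiracEq κ E Ψ₁) (h2eq : DiracEq κ E Ψ₂) :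
    ∃ c₁ c₂ : ℂ, ¬(c₁ = 0 ∧ c₂ = 0) ∧ ∀ x : ℝ, c₁ • Ψ₁ x + c₂ • Ψ₂ x = 0 := by
  obtain ⟨B, hB⟩ := hκbd
  have hsol₁ := h1eq.isDiracSolution (h1smooth.differentiable one_ne_zero)
  have hsol₂ := h2eq.isDiracSolution (h2smooth.differentiable one_ne_zero)
  have hω : |2 * E / 3| < |κp| := by
    have := min_le_left |κp| |κm|
    rw [abs_div, abs_mul, abs_two, abs_of_pos (three_pos : (0 : ℝ) < 3)]
    linarith
  rcases hp0.lt_or_gt with hneg | hpos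
  · have hswap : ∀ {Ψ : ℝ → ℂ × ℂ}, (∃ C, ∀ x, ‖Ψ x‖ ≤ C) → ∃ C, ∀ x, ‖(Ψ x).swap‖ ≤ C :=
      fun ⟨C, hC⟩ => ⟨C, fun x => by simpa [Prod.norm_def, max_comm] using hC x⟩
    obtain ⟨c₁, c₂, hc, hzero⟩ := hsol₁.swap.exists_smul_add_smul_eq_zero
      (fun x => by simpa using hB x) hp.neg (by rwa [abs_of_neg hneg] at hω)
      hsol₂.swap (hswap h1bd) (hswap h2bd)
    exact ⟨c₁, c₂, hc, fun x => by simpa using congrArg Prod.swap (hzero x)⟩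
  · exact hsol₁.exists_smul_add_smul_eq_zero hB hp (by rwa [abs_of_pos hpos] at hω)
      hsol₂ h1bd h2bd

/-- For bounded continuous `κ` with nonzero limits at `±∞` (with `L¹`
convergence to its limits) and `E` in the spectral gap, the space of bounded `C¹` solutions of
`𝒟Ψ = EΨ` has dimension at most one: any two such solutions are linearly dependent over `ℂ`.
In particular, every eigenvalue of `𝒟` in the spectral gap is simple. -/
theorem gap_eigenvalues_are_simple
    (κ : ℝ → ℝ) (hκcont : Continuous κ) (hκbd : ∃ B : ℝ, ∀ x, |κ x| ≤ B)
    (κp κm : ℝ)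
    (hp : Tendsto κ atTop (nhds κp)) (hm : Tendsto κ atBot (nhds κm))
    (hp0 : κp ≠ 0) (hm0 : κm ≠ 0)
    (hintp : IntegrableOn (fun x => κ x - κp) (Set.Ici 0))
    (hintm : IntegrableOn (fun x => κ x - κm) (Set.Iic 0))
    (E : ℝ) (hE : |E| < (3 / 2) * min |κp| |κm|)
    (Ψ₁ Ψ₂ : ℝ → ℂ × ℂ)
    (h1smooth : ContDiff ℝ 1 Ψ₁) (h2smooth : ContDiff ℝ 1 Ψ₂)
    (h1bd : ∃ B : ℝ, ∀ x, ‖Ψ₁ x‖ ≤ B) (h2bd : ∃ B : ℝ, ∀ x, ‖Ψ₂ x‖ ≤ B)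
    (h1eq : DiracEq κ E Ψ₁) (h2eq : DiracEq κ E Ψ₂) :
    ∃ c₁ c₂ : ℂ, ¬(c₁ = 0 ∧ c₂ = 0) ∧ ∀ x : ℝ, c₁ • Ψ₁ x + c₂ • Ψ₂ x = 0 :=
  gap_eigenvalues_are_simple_general κ hκbd κp κm hp hp0 E hE Ψ₁ Ψ₂ h1smooth h2smooth h1bd h2bd h1eq
    h2eq
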